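/- arXiv:1012.0107 — 2 statements merged into one kernel-verified Lean document; each statement's English description precedes it below -/
import Mathlib

section
/- Let G be a countable group acting effectively and smoothly on a manifold M, in the sense that the action map G × M → M is smooth when G carries the discrete topology. Let U ⊆ ℝ^k be open and connected, and let r ↦ g_r be a map U → G such that (r, m) ↦ g_r · m is smooth from U × M to M. Then r ↦ g_r is constant. -/
/-!
For a fixed `m : M` the orbit map `r ↦ g r • m` is continuous on `U` and takes values in the
countable orbit `G • m`. Read through a chart near any of its values, it becomes a continuous map
into a normed space with countable image, and countable subsets of a metric space are totally
disconnected, so it is locally constant; on the connected set `U` it is constant. Hence all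
`g r` agree at every point of `M`, and effectiveness gives `g r = g s`.
-/

open Set Filter Topology
open scoped Manifold

theorem IsPreconnected.apply_eq_of_eventually_eq {X Y : Type*} [TopologicalSpace X] {s : Set X}
    (hs : IsPreconnected s) {f : X → Y} (hf : ∀ x ∈ s, ∀ᶠ y in 𝓝 x, f y = f x) {x y : X}
    (hx : x ∈ s) (hy : y ∈ s) : f x = f y := by
  have : PreconnectedSpace s := isPreconnected_iff_preconnectedSpace.mp hs
  have hloc : IsLocallyConstant (s.domRestrict f) :=
    (IsLocallyConstant.iff_eventually_eq _).2 fun z =>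
      continuous_subtype_val.continuousAt.eventually (hf z z.2)
  exact hloc.apply_eq_of_preconnectedSpace ⟨x, hx⟩ ⟨y, hy⟩

section CountableImage

variable {𝕜 E H M X : Type*} [NontriviallyNormedField 𝕜] [NormedAddCommGroup E]
  [NormedSpace 𝕜 E] [TopologicalSpace H] [TopologicalSpace M] [ChartedSpace H M]
  [TopologicalSpace X] [LocallyConnectedSpace X]
  {f : X → M} {U : Set X}

theorem ContinuousOn.eventually_eq_of_countable_image (I : ModelWithCorners 𝕜 E H)
    (hU : IsOpen U) (hf : ContinuousOn f U) (hcount : (f '' U).Countable) {x₀ : X}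
    (hx₀ : x₀ ∈ U) : ∀ᶠ x in 𝓝 x₀, f x = f x₀ := by
  set e := extChartAt I (f x₀)
  have hW : U ∩ f ⁻¹' e.source ∈ 𝓝 x₀ :=
    inter_mem (hU.mem_nhds hx₀) ((hf.continuousAt (hU.mem_nhds hx₀)).preimage_mem_nhds
      ((isOpen_extChartAt_source (f x₀)).mem_nhds (mem_extChartAt_source (f x₀))))
  obtain ⟨V, ⟨hVopen, hx₀V, hVconn⟩, hVW⟩ :=
    (LocallyConnectedSpace.open_connected_basis x₀).mem_iff.mp hW
  have hcont : ContinuousOn (e ∘ f) V :=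
    (continuousOn_extChartAt (f x₀)).comp (hf.mono fun x hx => (hVW hx).1)
      fun x hx => (hVW hx).2
  have hcountV : (f '' V).Countable := hcount.mono (image_mono fun x hx => (hVW hx).1)
  have himage : (e ∘ f '' V).Subsingleton :=
    (hcountV.image e).isTotallyDisconnected _ (image_comp e f V).subset
      (hVconn.isPreconnected.image _ hcont)
  filter_upwards [hVopen.mem_nhds hx₀V] with x hx
  exact e.injOn (hVW hx).2 (hVW hx₀V).2
    (himage (mem_image_of_mem _ hx) (mem_image_of_mem _ hx₀V))

theorem IsPreconnected.apply_eq_of_countable_image (I : ModelWithCorners 𝕜 E H)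
    (hUconn : IsPreconnected U) (hU : IsOpen U) (hf : ContinuousOn f U)
    (hcount : (f '' U).Countable) {x y : X} (hx : x ∈ U) (hy : y ∈ U) :
    f x = f y :=
  hUconn.apply_eq_of_eventually_eq (fun _ hz => hf.eventually_eq_of_countable_image I hU hcount hz)
    hx hy

end CountableImage

theorem stmt12_general {EM HM : Type*} [NormedAddCommGroup EM] [NormedSpace ℝ EM]
    [TopologicalSpace HM] (IM : ModelWithCorners ℝ EM HM)
    {M : Type*} [TopologicalSpace M] [ChartedSpace HM M]
    {G : Type*} [Group G] [Countable G] [MulAction G M] [FaithfulSMul G M]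
    {k : ℕ} (U : Set (EuclideanSpace ℝ (Fin k))) (hUopen : IsOpen U)
    (hUconn : IsConnected U)
    (g : EuclideanSpace ℝ (Fin k) → G)
    (hg : ContMDiffOn ((𝓘(ℝ, EuclideanSpace ℝ (Fin k))).prod IM) IM (⊤ : ℕ∞)
      (fun p : EuclideanSpace ℝ (Fin k) × M => g p.1 • p.2) (U ×ˢ Set.univ)) :
    ∀ r ∈ U, ∀ s ∈ U, g r = g s := by
  intro r hr s hs
  refine eq_of_smul_eq_smul fun m : M => ?_
  have horbit_cont : ContinuousOn (fun t => g t • m) U :=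
    hg.continuousOn.comp (Continuous.prodMk_left m).continuousOn
      fun t ht => mk_mem_prod ht (mem_univ m)
  have horbit_countable : ((fun t => g t • m) '' U).Countable :=
    (countable_range fun h : G => h • m).mono (image_subset_iff.2 fun t _ => mem_range_self (g t))
  exact IsPreconnected.apply_eq_of_countable_image IM hUconn.isPreconnected hUopen horbit_cont
    horbit_countable hr hs

/-- Let a countable group `G` act effectively on a manifold `M`, the
action map `G × M → M` being smooth when `G` is discrete (i.e. each `g` acts by a
smooth map).  If `U ⊆ ℝᵏ` is open and connected and `r ↦ g r` is such that
`(r, x) ↦ g r • x` is smooth on `U × M`, then `r ↦ g r` is constant on `U`. -/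
theorem stmt12 {EM HM : Type*} [NormedAddCommGroup EM] [NormedSpace ℝ EM]
    [TopologicalSpace HM] (IM : ModelWithCorners ℝ EM HM)
    {M : Type*} [TopologicalSpace M] [ChartedSpace HM M] [IsManifold IM (⊤ : ℕ∞) M]
    {G : Type*} [Group G] [Countable G] [MulAction G M] [FaithfulSMul G M]
    (hact : ∀ g : G, ContMDiff IM IM (⊤ : ℕ∞) fun x : M => g • x)
    {k : ℕ} (U : Set (EuclideanSpace ℝ (Fin k))) (hUopen : IsOpen U)
    (hUconn : IsConnected U)
    (g : EuclideanSpace ℝ (Fin k) → G)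
    (hg : ContMDiffOn ((𝓘(ℝ, EuclideanSpace ℝ (Fin k))).prod IM) IM (⊤ : ℕ∞)
      (fun p : EuclideanSpace ℝ (Fin k) × M => g p.1 • p.2) (U ×ˢ Set.univ)) :
    ∀ r ∈ U, ∀ s ∈ U, g r = g s :=
  stmt12_general IM U hUopen hUconn g hg
end

section
/- Let G be a topological group acting continuously on a topological space M, let m ∈ M, and let ψ : O × D → M be a homeomorphism onto an open set U_m, where O ⊆ G is open and D ⊆ M, with ψ(a,x) = a·x. For x ∈ D define A_x = {g ∈ G : g·m ∈ ψ(O × {x})}. Then the sets A_x, for distinct x ∈ D, are pairwise disjoint, and each A_x is open in G. -/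
open Pointwise

theorem setOf_exists_mem_smul_eq_eq_mul {G M : Type*} [Group G] [MulAction G M]
    (m x : M) (O : Set G) :
    {g : G | ∃ a ∈ O, g • m = a • x} = O * {h : G | h • m = x} := by
  ext g
  simp only [Set.mem_ofPred_eq, Set.mem_mul]
  constructor
  · rintro ⟨a, ha, hg⟩
    exact ⟨a, ha, a⁻¹ * g, by rw [mul_smul, hg, inv_smul_smul], mul_inv_cancel_left a g⟩
  · rintro ⟨a, ha, h, rfl, rfl⟩
    exact ⟨a, ha, mul_smul a h m⟩

theorem disjoint_setOf_exists_mem_smul_eq_of_injOn {G M : Type*} [SMul G M] {m x y : M}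
    {O : Set G} {D : Set M} (hinj : Set.InjOn (fun p : G × M => p.1 • p.2) (O ×ˢ D))
    (hx : x ∈ D) (hy : y ∈ D) (hxy : x ≠ y) :
    Disjoint {g : G | ∃ a ∈ O, g • m = a • x} {g : G | ∃ a ∈ O, g • m = a • y} := by
  rw [Set.disjoint_left]
  rintro g ⟨a, ha, hgx⟩ ⟨b, hb, hgy⟩
  have hab : ((a, x) : G × M) = (b, y) :=
    hinj (Set.mk_mem_prod ha hx) (Set.mk_mem_prod hb hy) (hgx.symm.trans hgy)
  exact hxy (congrArg Prod.snd hab)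

theorem stmt19_general {G M : Type*} [Group G] [TopologicalSpace G] [IsTopologicalGroup G]
    [MulAction G M]
    (m : M) (O : Set G) (hO : IsOpen O) (D : Set M)
    (hinj : Set.InjOn (fun p : G × M => p.1 • p.2) (O ×ˢ D)) :
    (∀ x ∈ D, IsOpen {g : G | ∃ a ∈ O, g • m = a • x}) ∧
    (∀ x ∈ D, ∀ y ∈ D, x ≠ y →
      Disjoint {g : G | ∃ a ∈ O, g • m = a • x} {g : G | ∃ a ∈ O, g • m = a • y}) := by
  refine ⟨fun x _ => ?_, fun x hx y hy hxy =>
    disjoint_setOf_exists_mem_smul_eq_of_injOn hinj hx hy hxy⟩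
  rw [setOf_exists_mem_smul_eq_eq_mul]
  exact hO.mul_right

/-- Let a topological group `G` act continuously on `M`, let `m ∈ M`,
`O ⊆ G` open, `D ⊆ M`, and let `ψ : O × D → M, (a, x) ↦ a • x`, be a homeomorphism
onto an open set `U_m` (in particular injective on `O ×ˢ D` with open image).  For
`x ∈ D` let `A_x = {g : g • m ∈ ψ (O × {x})}`.  Then each `A_x` is open, and for
distinct `x, y ∈ D` the sets `A_x` and `A_y` are disjoint. -/
theorem stmt19 {G M : Type*} [Group G] [TopologicalSpace G] [IsTopologicalGroup G]
    [TopologicalSpace M] [MulAction G M]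
    (hact : Continuous fun p : G × M => p.1 • p.2)
    (m : M) (O : Set G) (hO : IsOpen O) (D : Set M)
    (hinj : Set.InjOn (fun p : G × M => p.1 • p.2) (O ×ˢ D))
    (hopenim : IsOpen ((fun p : G × M => p.1 • p.2) '' (O ×ˢ D))) :
    (∀ x ∈ D, IsOpen {g : G | ∃ a ∈ O, g • m = a • x}) ∧
    (∀ x ∈ D, ∀ y ∈ D, x ≠ y →
      Disjoint {g : G | ∃ a ∈ O, g • m = a • x} {g : G | ∃ a ∈ O, g • m = a • y}) :=
  stmt19_general m O hO D hinj
end
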